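/- Under the same assumptions, the thresholded function F̃^thresh(x) = max(F̃(x), F(x♮) + 3r‖δ‖) is (μ/2)-sharp around its set of minimizers X = {x : F̃(x) ≤ F(x♮) + 3r‖δ‖}: for every x̄ ∉ X there exists x̃ ∈ X with F̃^thresh(x̄) - F̃^thresh(x̃) ≥ (μ/2)‖x̄ - x̃‖. -/

import Mathlib

/-!
Write `ε = r‖δ‖`. Since `|F̃ - F| ≤ ε`, we have `F̃(x♮) ≤ c - 2ε`, while sharpness of `F` confines
the level set `{F̃ = c}` to the ball of radius `4ε/μ` around `x♮`. For `x̄ ∉ X`, let `x̃` be a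
point where the segment from `x♮` to `x̄` meets that level set; convexity of `F̃` along the
segment gives `F̃(x̄) - c ≥ 2ε‖x̄ - x̃‖ / ‖x̃ - x♮‖ ≥ (μ/2)‖x̄ - x̃‖`. When `ε = 0`, `x̃ = x♮`.
-/

open Set Metric AffineMap

noncomputable def exactPenalty {V W : Type*} [NormedAddCommGroup V] [NormedAddCommGroup W]
    [NormedSpace ℝ V] [NormedSpace ℝ W] (f : V → ℝ) (A : V →L[ℝ] W) (K : Set V)
    (r ℓ : ℝ) (b : W) (x : V) : ℝ :=
  f x + r * ‖A x - b‖ + ℓ * infDist x K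

section

variable {V W : Type*} [NormedAddCommGroup V] [NormedSpace ℝ V]
  [NormedAddCommGroup W] [NormedSpace ℝ W]

theorem convexOn_infDist {K : Set V} (hK : Convex ℝ K) :
    ConvexOn ℝ univ (infDist · K) := by
  refine ⟨convex_univ, fun x _ y _ a b ha hb hab => ?_⟩
  rcases K.eq_empty_or_nonempty with rfl | hKne
  · simp
  refine le_of_forall_pos_le_add fun ε hε => ?_
  obtain ⟨zx, hzx, hdx⟩ := (infDist_lt_iff hKne).1 (lt_add_of_pos_right _ hε)
  obtain ⟨zy, hzy, hdy⟩ := (infDist_lt_iff hKne).1 (lt_add_of_pos_right _ hε)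
  calc infDist (a • x + b • y) K
      ≤ ‖a • (x - zx) + b • (y - zy)‖ := by
        rw [smul_sub, smul_sub, sub_add_sub_comm, ← dist_eq_norm]
        exact infDist_le_dist_of_mem (hK hzx hzy ha hb hab)
    _ ≤ a * dist x zx + b * dist y zy := by
        simpa [norm_smul, abs_of_nonneg ha, abs_of_nonneg hb, dist_eq_norm]
          using norm_add_le (a • (x - zx)) (b • (y - zy))
    _ ≤ a * (infDist x K + ε) + b * (infDist y K + ε) := by gcongr
    _ = a • infDist x K + b • infDist y K + ε := by
        rw [smul_eq_mul, smul_eq_mul]; linear_combination ε * hab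

variable {f : V → ℝ} {A : V →L[ℝ] W} {K : Set V} {r ℓ : ℝ}

theorem convexOn_exactPenalty (hf : ConvexOn ℝ univ f) (hK : Convex ℝ K) (hr : 0 ≤ r)
    (hℓ : 0 ≤ ℓ) (b : W) : ConvexOn ℝ univ (exactPenalty f A K r ℓ b) := by
  have hres : ConvexOn ℝ univ (fun x => ‖A x - b‖) :=
    (convexOn_norm convex_univ).comp_affineMap (A.toLinearMap.toAffineMap - const ℝ V b)
  exact (hf.add (hres.smul hr)).add ((convexOn_infDist hK).smul hℓ)

theorem continuous_exactPenalty (hf : Continuous f) (b : W) :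
    Continuous (exactPenalty f A K r ℓ b) := by
  unfold exactPenalty; fun_prop

theorem abs_exactPenalty_sub_exactPenalty_le (hr : 0 ≤ r) (b b' : W) (x : V) :
    |exactPenalty f A K r ℓ b' x - exactPenalty f A K r ℓ b x| ≤ r * ‖b' - b‖ := by
  have h : |‖A x - b'‖ - ‖A x - b‖| ≤ ‖b' - b‖ := by
    simpa [norm_sub_rev b] using abs_norm_sub_norm_le (A x - b') (A x - b)
  have hdiff : exactPenalty f A K r ℓ b' x - exactPenalty f A K r ℓ b x
      = r * (‖A x - b'‖ - ‖A x - b‖) := by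
    simp only [exactPenalty]; ring
  rw [hdiff, abs_mul, abs_of_nonneg hr]
  exact mul_le_mul_of_nonneg_left h hr

theorem exactPenalty_of_mem {x : V} (hx : x ∈ K) : exactPenalty f A K r ℓ (A x) x = f x := by
  simp [exactPenalty, infDist_zero_of_mem hx]

theorem ConvexOn.exists_eq_mul_norm_sub_le {G : V → ℝ} (hG : ConvexOn ℝ univ G)
    (hGc : Continuous G) {x₀ xb : V} {c κ : ℝ} (hx₀ : G x₀ < c) (hxb : c < G xb)
    (hbound : ∀ x, G x = c → κ * ‖x - x₀‖ ≤ c - G x₀) :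
    ∃ xt, G xt = c ∧ κ * ‖xb - xt‖ ≤ G xb - c := by
  obtain ⟨t, ⟨ht₀, ht₁⟩, hGt⟩ : c ∈ (fun t : ℝ => G (lineMap x₀ xb t)) '' Icc 0 1 :=
    intermediate_value_Icc zero_le_one (hGc.comp lineMap_continuous).continuousOn
      ⟨by simpa using hx₀.le, by simpa using hxb.le⟩
  simp only at hGt
  have htpos : 0 < t := ht₀.lt_of_ne <| by
    rintro rfl
    rw [lineMap_apply_zero] at hGt
    exact hx₀.ne hGt
  have hconv : c ≤ (1 - t) * G x₀ + t * G xb := by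
    simpa [← lineMap_apply_module, hGt] using
      hG.2 (mem_univ x₀) (mem_univ xb) (sub_nonneg.2 ht₁) ht₀ (sub_add_cancel 1 t)
  have hnear : ‖lineMap x₀ xb t - x₀‖ = t * ‖xb - x₀‖ := by
    rw [← dist_eq_norm, dist_lineMap_left, Real.norm_of_nonneg ht₀, dist_eq_norm']
  have hfar : ‖xb - lineMap x₀ xb t‖ = (1 - t) * ‖xb - x₀‖ := by
    rw [← dist_eq_norm, dist_comm, dist_lineMap_right, Real.norm_of_nonneg (sub_nonneg.2 ht₁),
      dist_eq_norm']
  refine ⟨lineMap x₀ xb t, hGt, le_of_mul_le_mul_left ?_ htpos⟩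
  have hκ := hbound _ hGt
  rw [hnear] at hκ
  rw [hfar]
  -- `t (G xb - c) ≥ (1 - t) (c - G x₀) ≥ (1 - t) κ t ‖xb - x₀‖`
  nlinarith [mul_le_mul_of_nonneg_left hκ (sub_nonneg.2 ht₁)]

end

theorem thresholded_noisy_objective_sharp_general
    {V W : Type*} [NormedAddCommGroup V] [NormedSpace ℝ V] [FiniteDimensional ℝ V]
    [NormedAddCommGroup W] [NormedSpace ℝ W]
    (f : V → ℝ) (hf : ConvexOn ℝ Set.univ f)
    (A : V →L[ℝ] W) (K : Set V) (hKconv : Convex ℝ K)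
    (x0 : V) (hx0K : x0 ∈ K) (b : W) (hb : b = A x0)
    (μ r ℓ : ℝ) (hr : 0 ≤ r) (hℓ : 0 ≤ ℓ)
    (hsharp : ∀ x : V,
      (f x + r * ‖A x - b‖ + ℓ * Metric.infDist x K) - f x0 ≥ μ * ‖x - x0‖)
    (δ : W)
    (Ft : V → ℝ)
    (hFt : Ft = fun x => f x + r * ‖A x - (b + δ)‖ + ℓ * Metric.infDist x K)
    (c : ℝ) (hc : c = (f x0 + r * ‖A x0 - b‖ + ℓ * Metric.infDist x0 K) + 3 * r * ‖δ‖)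
    (X : Set V) (hX : X = {x : V | Ft x ≤ c}) :
    ∀ xb : V, xb ∉ X → ∃ xt ∈ X,
      max (Ft xb) c - max (Ft xt) c ≥ μ / 2 * ‖xb - xt‖ := by
  intro xb hxb
  replace hFt : Ft = exactPenalty f A K r ℓ (b + δ) := hFt
  subst hFt hX
  replace hsharp (x : V) : μ * ‖x - x0‖ ≤ exactPenalty f A K r ℓ b x - f x0 := hsharp x
  have hF0 : exactPenalty f A K r ℓ b x0 = f x0 := hb ▸ exactPenalty_of_mem hx0K
  replace hc : c = f x0 + 3 * (r * ‖δ‖) := by rw [hc, ← exactPenalty, hF0]; ring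
  have hclose (x : V) := abs_le.1 <| by
    simpa using abs_exactPenalty_sub_exactPenalty_le (f := f) (A := A) (K := K) (ℓ := ℓ) hr
      b (b + δ) x
  have hxb' : c < exactPenalty f A K r ℓ (b + δ) xb := not_le.1 hxb
  rw [max_eq_left hxb'.le]
  rcases (mul_nonneg hr (norm_nonneg δ)).eq_or_lt with hε | hε
  · have hx0 : exactPenalty f A K r ℓ (b + δ) x0 ≤ c := by linarith [(hclose x0).2]
    refine ⟨x0, hx0, ?_⟩
    rw [max_eq_right hx0]
    linarith [(hclose xb).1, hsharp xb]
  · have hcont : Continuous f := continuousOn_univ.1 (hf.continuousOn isOpen_univ)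
    obtain ⟨xt, hxt, hineq⟩ :=
      (convexOn_exactPenalty hf hKconv hr hℓ (b + δ)).exists_eq_mul_norm_sub_le
        (continuous_exactPenalty hcont (b + δ)) (x₀ := x0) (κ := μ / 2)
        (by linarith [(hclose x0).2]) hxb'
        (fun x hx => by linarith [(hclose x).1, (hclose x0).2, hsharp x])
    exact ⟨xt, hxt.le, by rwa [max_eq_right hxt.le]⟩

/-- The thresholded noisy penalized objective
`F̃^thresh(x) = max(F̃(x), F(x0) + 3r‖δ‖)` is `(μ/2)`-sharp around its set of minimizers
`X = {x : F̃(x) ≤ F(x0) + 3r‖δ‖}`: for every `xb ∉ X` there exists `xt ∈ X` with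
`F̃^thresh(xb) - F̃^thresh(xt) ≥ (μ/2)‖xb - xt‖`. -/
theorem thresholded_noisy_objective_sharp
    {V W : Type*} [NormedAddCommGroup V] [NormedSpace ℝ V] [FiniteDimensional ℝ V]
    [NormedAddCommGroup W] [NormedSpace ℝ W] [FiniteDimensional ℝ W]
    (f : V → ℝ) (hf : ConvexOn ℝ Set.univ f)
    (A : V →L[ℝ] W) (K : Set V) (hKclosed : IsClosed K) (hKconv : Convex ℝ K)
    (hKcone : ∀ c : ℝ, 0 ≤ c → ∀ x ∈ K, c • x ∈ K)
    (x0 : V) (hx0K : x0 ∈ K) (b : W) (hb : b = A x0)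
    (μ r ℓ : ℝ) (hμ : 0 < μ) (hr : 0 ≤ r) (hℓ : 0 ≤ ℓ)
    (hsharp : ∀ x : V,
      (f x + r * ‖A x - b‖ + ℓ * Metric.infDist x K) - f x0 ≥ μ * ‖x - x0‖)
    (δ : W)
    (Ft : V → ℝ)
    (hFt : Ft = fun x => f x + r * ‖A x - (b + δ)‖ + ℓ * Metric.infDist x K)
    (c : ℝ) (hc : c = (f x0 + r * ‖A x0 - b‖ + ℓ * Metric.infDist x0 K) + 3 * r * ‖δ‖)
    (X : Set V) (hX : X = {x : V | Ft x ≤ c}) :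
    ∀ xb : V, xb ∉ X → ∃ xt ∈ X,
      max (Ft xb) c - max (Ft xt) c ≥ μ / 2 * ‖xb - xt‖ :=
  thresholded_noisy_objective_sharp_general f hf A K hKconv x0 hx0K b hb μ r ℓ hr hℓ hsharp δ Ft hFt
    c hc X hX
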